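/- arXiv:2305.05137 — 3 statements merged into one kernel-verified Lean document; each statement's English description precedes it below -/
import Mathlib

section
/- Let N ≥ 2 be an integer and y ∈ [0, 1/2]. Define A_N(y) = ((1-3y+2y²)/(1-3y+(N+2)y²))·(1 - y²/(1-3y+3y²))^(N-2) and C_N(y) = (1-3y-(N-4)y²)/(1-3y+(N+2)y²). Then A_N(y) ≥ C_N(y), provided 1-3y+(N+2)y² > 0. -/
/-!
With `D = 1 - 3y + 3y²` and `x = y² / D`, Bernoulli's inequality gives
`(1 - x)^(N-2) ≥ 1 - (N-2)x`, and `(1 - 3y + 2y²)(1 - (N-2)x) = (D - y²) P / D` with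
`P = 1 - 3y - (N-5)y²`. Since `P ≤ D`, removing `y²` from both `P` and `D` can only
decrease the ratio, so `(D - y²) P / D ≥ P - y² = 1 - 3y - (N-4)y²`.
-/

section LinearOrderedRing

variable {R : Type*} [CommRing R] [LinearOrder R] [IsStrictOrderedRing R]

lemma one_sub_mul_le_pow {x : R} (hx : x ≤ 2) (n : ℕ) : 1 - n * x ≤ (1 - x) ^ n := by
  simpa [sub_eq_add_neg] using one_add_mul_le_pow (a := -x) (by linarith) n

lemma sub_mul_le_sub_mul_of_le {p d t : R} (ht : 0 ≤ t) (hpd : p ≤ d) :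
    (p - t) * d ≤ (d - t) * p := by
  nlinarith [mul_nonneg ht (sub_nonneg.mpr hpd)]

end LinearOrderedRing

theorem stmt_12 (N : ℕ) (hN : 2 ≤ N) (y : ℝ) (hy : y ∈ Set.Icc (0:ℝ) (1/2))
    (hden : 0 < 1 - 3 * y + ((N:ℝ) + 2) * y ^ 2) :
    (1 - 3 * y + 2 * y ^ 2) / (1 - 3 * y + ((N:ℝ) + 2) * y ^ 2)
        * (1 - y ^ 2 / (1 - 3 * y + 3 * y ^ 2)) ^ (N - 2)
      ≥ (1 - 3 * y - ((N:ℝ) - 4) * y ^ 2) / (1 - 3 * y + ((N:ℝ) + 2) * y ^ 2) := by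
  obtain ⟨-, hy⟩ := hy
  set D := 1 - 3 * y + 3 * y ^ 2
  have hD : 0 < D := by nlinarith [sq_nonneg (y - 1 / 2)]
  have ha : 0 ≤ D - y ^ 2 := by nlinarith
  have hN' : ((N - 2 : ℕ) : ℝ) = N - 2 := by push_cast [Nat.cast_sub hN]; ring
  have hbern : 1 - ((N : ℝ) - 2) * (y ^ 2 / D) ≤ (1 - y ^ 2 / D) ^ (N - 2) := by
    rw [← hN']
    exact one_sub_mul_le_pow (by rw [div_le_iff₀ hD]; linarith) _
  have hPD : D - ((N : ℝ) - 2) * y ^ 2 ≤ D := by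
    nlinarith [sq_nonneg y, (by exact_mod_cast hN : (2 : ℝ) ≤ N)]
  have hratio : 1 - 3 * y - ((N : ℝ) - 4) * y ^ 2
      ≤ (D - y ^ 2) * (1 - ((N : ℝ) - 2) * (y ^ 2 / D)) := by
    calc 1 - 3 * y - ((N : ℝ) - 4) * y ^ 2
        = (D - ((N : ℝ) - 2) * y ^ 2 - y ^ 2) * D / D := by field_simp; ring
      _ ≤ (D - y ^ 2) * (D - ((N : ℝ) - 2) * y ^ 2) / D :=
        div_le_div_of_nonneg_right (sub_mul_le_sub_mul_of_le (sq_nonneg y) hPD) hD.le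
      _ = (D - y ^ 2) * (1 - ((N : ℝ) - 2) * (y ^ 2 / D)) := by field_simp
  rw [ge_iff_le, div_mul_eq_mul_div]
  refine div_le_div_of_nonneg_right ?_ hden.le
  calc 1 - 3 * y - ((N : ℝ) - 4) * y ^ 2
      ≤ (D - y ^ 2) * (1 - ((N : ℝ) - 2) * (y ^ 2 / D)) := hratio
    _ ≤ (D - y ^ 2) * (1 - y ^ 2 / D) ^ (N - 2) := mul_le_mul_of_nonneg_left hbern ha
    _ = (1 - 3 * y + 2 * y ^ 2) * (1 - y ^ 2 / D) ^ (N - 2) := by ring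
end

section
/- Let m ≥ 2 be an integer and let β ∈ (0, 1/2) be the smallest positive root of h̄_m(y) = (m-10)y³ - (m-13)y² - 6y + 1. Then for all y ∈ [0, β], (1 - y²/(3y²-3y+1))^(m-1) ≥ 2y/(1-y). -/
/-!
Write `x = y² / (3y² - 3y + 1)`, which lies in `[0, 2]`. Bernoulli's inequality gives
`(1 - x)^(m-1) ≥ 1 - (m-1) x`, and `1 - (m-1) x - 2y/(1-y) = h̄_m(y) / ((3y² - 3y + 1)(1 - y))`.
Since `h̄_m(0) = 1` and `β` is the first positive root of `h̄_m`, the intermediate value theorem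
makes `h̄_m` nonnegative on `[0, β]`.
-/

open Set

/-- The cubic `h̄_m`, with the integer `m` replaced by a real parameter `c`. -/
def hBar (c y : ℝ) : ℝ := (c - 10) * y ^ 3 - (c - 13) * y ^ 2 - 6 * y + 1

lemma continuous_hBar (c : ℝ) : Continuous (hBar c) := by
  unfold hBar; fun_prop

lemma nonneg_of_le_first_root {f : ℝ → ℝ} {a b y : ℝ} (hf : ContinuousOn f (Icc a y))
    (ha : 0 < f a) (hfirst : ∀ z, a < z → f z = 0 → b ≤ z) (hy : y ∈ Icc a b) : 0 ≤ f y := by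
  by_contra! hneg
  obtain ⟨z, hz, hfz⟩ := intermediate_value_Icc' hy.1 hf ⟨hneg.le, ha.le⟩
  have hza : a < z := lt_of_le_of_ne hz.1 (by rintro rfl; exact ha.ne' hfz)
  have hzy : z = y := le_antisymm hz.2 (hy.2.trans (hfirst z hza hfz))
  exact hneg.ne (hzy ▸ hfz)

lemma three_mul_sq_sub_three_mul_add_one_pos (y : ℝ) : 0 < 3 * y ^ 2 - 3 * y + 1 := by
  nlinarith [sq_nonneg (2 * y - 1)]

lemma one_sub_mul_le_of_hBar_nonneg {c y : ℝ} (hy : y < 1) (h : 0 ≤ hBar c y) :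
    2 * y / (1 - y) ≤ 1 - (c - 1) * (y ^ 2 / (3 * y ^ 2 - 3 * y + 1)) := by
  have hD := three_mul_sq_sub_three_mul_add_one_pos y
  set D := 3 * y ^ 2 - 3 * y + 1 with hD_def
  have h1y : 0 < 1 - y := sub_pos.mpr hy
  have key : 1 - (c - 1) * (y ^ 2 / D) - 2 * y / (1 - y) = hBar c y / (D * (1 - y)) := by
    unfold hBar; field_simp; rw [hD_def]; ring
  have : 0 ≤ hBar c y / (D * (1 - y)) := by positivity
  linarith

lemma two_mul_div_le_pow_of_hBar_nonneg (n : ℕ) {y : ℝ} (hy : y < 1)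
    (h : 0 ≤ hBar (n + 1) y) :
    2 * y / (1 - y) ≤ (1 - y ^ 2 / (3 * y ^ 2 - 3 * y + 1)) ^ n := by
  set x := y ^ 2 / (3 * y ^ 2 - 3 * y + 1)
  have hx : x ≤ 2 := by
    rw [div_le_iff₀ (three_mul_sq_sub_three_mul_add_one_pos y)]; nlinarith [sq_nonneg (5 * y - 3)]
  calc 2 * y / (1 - y) ≤ 1 - ((n + 1 : ℝ) - 1) * x := one_sub_mul_le_of_hBar_nonneg hy h
    _ = 1 + n * -x := by ring
    _ ≤ (1 + -x) ^ n := one_add_mul_le_pow (by linarith) n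
    _ = (1 - x) ^ n := by rw [← sub_eq_add_neg]

theorem stmt_15_general (m : ℕ) (hm : 2 ≤ m) (β : ℝ) (hβ : β ∈ Set.Ioo (0:ℝ) (1/2))
    (hmin : ∀ y : ℝ, 0 < y →
      ((m:ℝ) - 10) * y ^ 3 - ((m:ℝ) - 13) * y ^ 2 - 6 * y + 1 = 0 → β ≤ y) :
    ∀ y ∈ Set.Icc (0:ℝ) β,
      (1 - y ^ 2 / (3 * y ^ 2 - 3 * y + 1)) ^ (m - 1) ≥ 2 * y / (1 - y) := by
  intro y hy
  have hnonneg : 0 ≤ hBar m y :=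
    nonneg_of_le_first_root (continuous_hBar _).continuousOn (by norm_num [hBar]) hmin hy
  obtain ⟨n, rfl⟩ : ∃ n, m = n + 1 := ⟨m - 1, by omega⟩
  push_cast at hnonneg
  exact two_mul_div_le_pow_of_hBar_nonneg n (by linarith [hy.2, hβ.2]) hnonneg

theorem stmt_15 (m : ℕ) (hm : 2 ≤ m) (β : ℝ) (hβ : β ∈ Set.Ioo (0:ℝ) (1/2))
    (hroot : ((m:ℝ) - 10) * β ^ 3 - ((m:ℝ) - 13) * β ^ 2 - 6 * β + 1 = 0)
    (hmin : ∀ y : ℝ, 0 < y →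
      ((m:ℝ) - 10) * y ^ 3 - ((m:ℝ) - 13) * y ^ 2 - 6 * y + 1 = 0 → β ≤ y) :
    ∀ y ∈ Set.Icc (0:ℝ) β,
      (1 - y ^ 2 / (3 * y ^ 2 - 3 * y + 1)) ^ (m - 1) ≥ 2 * y / (1 - y) :=
  stmt_15_general m hm β hβ hmin
end

section
/- Let λ ∈ [0, 1/2), θ ∈ [-λ/(1-λ), 0], and let m ≥ 2 be an integer. For every positive integer i, (2i-1)/(2i) · (1/(-θ)) · ((1-λ+λθ^(2i-1))/(1-λ+λθ^(2i)))^(m-1) ≥ ((1-λ)/(2λ)) · (1 - λ²/(3λ²-3λ+1))^(m-1), where the left side is interpreted as +∞ if θ = 0 (and as +∞ if λ = 0). -/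
theorem stmt_16 (lam θ : ℝ) (hlam : lam ∈ Set.Ico (0:ℝ) (1/2))
    (hθ : θ ∈ Set.Icc (-(lam / (1 - lam))) 0) (hθ0 : θ ≠ 0)
    (m : ℕ) (hm : 2 ≤ m) (i : ℕ) (hi : 1 ≤ i) :
    (2 * (i:ℝ) - 1) / (2 * (i:ℝ)) * (1 / (-θ))
        * ((1 - lam + lam * θ ^ (2 * i - 1)) / (1 - lam + lam * θ ^ (2 * i))) ^ (m - 1)
      ≥ (1 - lam) / (2 * lam)
        * (1 - lam ^ 2 / (3 * lam ^ 2 - 3 * lam + 1)) ^ (m - 1) := by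
  obtain ⟨hl0, hl2⟩ := hlam
  obtain ⟨hθl, hθu⟩ := hθ
  have h1l : (0:ℝ) < 1 - lam := by linarith
  have h12l : (0:ℝ) < 1 - 2 * lam := by linarith
  have hθneg : θ < 0 := lt_of_le_of_ne hθu hθ0
  have hlpos : 0 < lam := by
    by_contra h
    have : lam = 0 := le_antisymm (not_lt.mp h) hl0
    rw [this] at hθl
    simp at hθl
    linarith
  have hratpos : 0 < lam / (1 - lam) := div_pos hlpos h1l
  have habs : |θ| ≤ lam / (1 - lam) := by
    rw [abs_of_neg hθneg]; linarith
  have hrat1 : lam / (1 - lam) < 1 := by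
    rw [div_lt_one h1l]; linarith
  have habs1 : |θ| ≤ 1 := habs.trans hrat1.le
  have hD : (0:ℝ) < 3 * lam ^ 2 - 3 * lam + 1 := by nlinarith
  -- bounds on powers
  have hi1 : 1 ≤ 2 * i - 1 := by omega
  have hpodd : θ ^ (2 * i - 1) ≥ -(lam / (1 - lam)) := by
    have h1 : |θ ^ (2 * i - 1)| ≤ |θ| ^ 1 := by
      rw [abs_pow]
      exact pow_le_pow_of_le_one (abs_nonneg θ) habs1 hi1
    rw [pow_one] at h1
    linarith [neg_abs_le (θ ^ (2 * i - 1))]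
  have hpeven : θ ^ (2 * i) ≤ (lam / (1 - lam)) ^ 2 := by
    have h1 : |θ ^ (2 * i)| ≤ |θ| ^ 2 := by
      rw [abs_pow]
      exact pow_le_pow_of_le_one (abs_nonneg θ) habs1 (by omega)
    calc θ ^ (2 * i) ≤ |θ ^ (2 * i)| := le_abs_self _
      _ ≤ |θ| ^ 2 := h1
      _ ≤ (lam / (1 - lam)) ^ 2 := by
          apply pow_le_pow_left₀ (abs_nonneg θ) habs
  have hpeven0 : 0 ≤ θ ^ (2 * i) := by
    have : θ ^ (2 * i) = (θ ^ i) ^ 2 := by rw [← pow_mul, Nat.mul_comm]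
    rw [this]; positivity
  -- numerator and denominator bounds
  have hnum : 1 - lam + lam * θ ^ (2 * i - 1) ≥ (1 - 2 * lam) / (1 - lam) := by
    have h1 : lam * θ ^ (2 * i - 1) ≥ lam * (-(lam / (1 - lam))) :=
      mul_le_mul_of_nonneg_left hpodd hl0
    have h2 : lam * (-(lam / (1 - lam))) = -(lam ^ 2 / (1 - lam)) := by ring
    have h3 : 1 - lam - lam ^ 2 / (1 - lam) = (1 - 2 * lam) / (1 - lam) := by
      field_simp; ring
    linarith [h1, h2 ▸ h1]
  have hden_pos : 0 < 1 - lam + lam * θ ^ (2 * i) := by nlinarith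
  have hden : 1 - lam + lam * θ ^ (2 * i) ≤ (3 * lam ^ 2 - 3 * lam + 1) / (1 - lam) ^ 2 := by
    have h1 : lam * θ ^ (2 * i) ≤ lam * (lam / (1 - lam)) ^ 2 :=
      mul_le_mul_of_nonneg_left hpeven hl0
    have h2 : 1 - lam + lam * (lam / (1 - lam)) ^ 2
        = (3 * lam ^ 2 - 3 * lam + 1) / (1 - lam) ^ 2 := by
      field_simp; ring
    rw [← h2]; linarith
  -- base comparison
  have hB : 1 - lam ^ 2 / (3 * lam ^ 2 - 3 * lam + 1)
      = (1 - 2 * lam) * (1 - lam) / (3 * lam ^ 2 - 3 * lam + 1) := by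
    rw [eq_div_iff hD.ne', sub_mul, div_mul_cancel₀ _ hD.ne']; ring
  have hBnn : 0 ≤ 1 - lam ^ 2 / (3 * lam ^ 2 - 3 * lam + 1) := by
    rw [hB]; positivity
  have hbase : 1 - lam ^ 2 / (3 * lam ^ 2 - 3 * lam + 1)
      ≤ (1 - lam + lam * θ ^ (2 * i - 1)) / (1 - lam + lam * θ ^ (2 * i)) := by
    rw [hB]
    have hAB : (1 - 2 * lam) * (1 - lam) / (3 * lam ^ 2 - 3 * lam + 1)
        = ((1 - 2 * lam) / (1 - lam)) / ((3 * lam ^ 2 - 3 * lam + 1) / (1 - lam) ^ 2) := by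
      field_simp
    rw [hAB]
    apply div_le_div₀ (by linarith [hnum, div_nonneg h12l.le h1l.le]) hnum hden_pos hden
  have hpow : (1 - lam ^ 2 / (3 * lam ^ 2 - 3 * lam + 1)) ^ (m - 1)
      ≤ ((1 - lam + lam * θ ^ (2 * i - 1)) / (1 - lam + lam * θ ^ (2 * i))) ^ (m - 1) :=
    pow_le_pow_left₀ hBnn hbase (m - 1)
  -- factor bound
  have hipos : (1:ℝ) ≤ (i:ℝ) := by exact_mod_cast hi
  have hf1 : (1:ℝ) / 2 ≤ (2 * (i:ℝ) - 1) / (2 * (i:ℝ)) := by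
    rw [div_le_div_iff₀ (by norm_num) (by linarith)]
    linarith
  have hf2 : (1 - lam) / lam ≤ 1 / (-θ) := by
    have h1 : (1 - lam) / lam = 1 / (lam / (1 - lam)) := by
      field_simp
    rw [h1]
    apply one_div_le_one_div_of_le (by linarith) (by linarith)
  have hfac : (1 - lam) / (2 * lam) ≤ (2 * (i:ℝ) - 1) / (2 * (i:ℝ)) * (1 / (-θ)) := by
    have := mul_le_mul hf1 hf2 (by positivity) (by positivity)
    calc (1 - lam) / (2 * lam) = 1 / 2 * ((1 - lam) / lam) := by ring
      _ ≤ _ := this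
  have hLnn : 0 ≤ (2 * (i:ℝ) - 1) / (2 * (i:ℝ)) * (1 / (-θ)) := by
    have : (0:ℝ) ≤ (1 - lam) / (2 * lam) := by positivity
    linarith
  exact mul_le_mul hfac hpow (by positivity) hLnn
end
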